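/- Let (V,E) be an interval graph with representation F over a linear order, ≺ a partial order associated to (V,E), and suppose (a,b),(c,d) ∈ W with (a,b) Q (c,d), i.e., a E c and b E d. Then b E c and a E d cannot both hold; moreover, if a ≺ b then c ≺ d. -/

import Mathlib

open Set

variable {V : Type*}

/-- An interval representation of a graph `E` over a linear order `L`. -/
def IsIntervalRep {V : Type*} {L : Type} [LinearOrder L] (E : V → V → Prop)
    (fL fR : V → L) : Prop :=
  (∀ v, fL v ≤ fR v) ∧ ∀ u v, E u v ↔ (fL u ≤ fR v ∧ fL v ≤ fR u)

/-- `E` is a (reflexive, symmetric) interval graph. -/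
def IsIntervalGraph {V : Type*} (E : V → V → Prop) : Prop :=
  (∀ v, E v v) ∧ (∀ u v, E u v → E v u) ∧
    ∃ (L : Type) (_ : LinearOrder L) (fL fR : V → L), IsIntervalRep E fL fR

/-- `p 0, …, p n` is a path in `E`. -/
def IsPath {V : Type*} (E : V → V → Prop) (p : ℕ → V) (n : ℕ) : Prop :=
  ∀ i < n, E (p i) (p (i + 1))

/-- A minimal path: no chords. -/
def IsMinimalPath {V : Type*} (E : V → V → Prop) (p : ℕ → V) (n : ℕ) : Prop :=
  IsPath E p n ∧ ∀ i j, i + 1 < j → j ≤ n → ¬ E (p i) (p j)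

/-- Two vertices are connected by a path. -/
def Reach {V : Type*} (E : V → V → Prop) (u v : V) : Prop :=
  ∃ (n : ℕ) (p : ℕ → V), IsPath E p n ∧ p 0 = u ∧ p n = v

def Connected {V : Type*} (E : V → V → Prop) : Prop := ∀ u v, Reach E u v

/-- `r` is a strict partial order associated to the graph `E` (i.e. `E` is the
incomparability graph of `r`). -/
def IsAssociated {V : Type*} (E r : V → V → Prop) : Prop :=
  (∀ v, ¬ r v v) ∧ (∀ a b c, r a b → r b c → r a c) ∧
    ∀ u v, ¬ E u v ↔ (r u v ∨ r v u)

/-- `E` is uniquely orderable: it has an associated partial order, unique up to duality. -/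
def UniquelyOrderable {V : Type*} (E : V → V → Prop) : Prop :=
  ∃ r, IsAssociated E r ∧ ∀ r', IsAssociated E r' → r' = r ∨ r' = flip r

def Kset {V : Type*} (E : V → V → Prop) (B : Set V) : Set V := {v | ∀ b ∈ B, E v b}

def Rset {V : Type*} (E : V → V → Prop) (B : Set V) : Set V :=
  {v | v ∉ B ∧ v ∉ Kset E B}

/-- `B` is a buried subgraph of `E`. -/
def Buried {V : Type*} (E : V → V → Prop) (B : Set V) : Prop :=
  (∃ a ∈ B, ∃ b ∈ B, ¬ E a b) ∧ (∀ b ∈ B, b ∉ Kset E B) ∧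
    (Rset E B).Nonempty ∧ ∀ b ∈ B, ∀ r ∈ Rset E B, ¬ E b r

/-- The set `W` of non-adjacent ordered pairs. -/
def Wset {V : Type*} (E : V → V → Prop) : Set (V × V) := {p | ¬ E p.1 p.2}

/-- The relation `Q` on pairs. -/
def Qrel {V : Type*} (E : V → V → Prop) (p q : V × V) : Prop :=
  E p.1 q.1 ∧ E p.2 q.2

/-- `p` and `q` are connected by a `Q`-path inside `W`. -/
def QReach {V : Type*} (E : V → V → Prop) (p q : V × V) : Prop :=
  ∃ (n : ℕ) (c : ℕ → V × V), c 0 = p ∧ c n = q ∧ (∀ i ≤ n, c i ∈ Wset E) ∧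
    ∀ i < n, Qrel E (c i) (c (i + 1))

/-- The sets `B_n(v,u)` of the standard construction. -/
def Bfam {V : Type*} (E : V → V → Prop) (v u : V) : ℕ → Set V
  | 0 => {v, u}
  | n + 1 => {w | ∃ z ∈ Bfam E v u n, ∃ z' ∈ Bfam E v u n, E z w ∧ ¬ E z' w}

/-- `B(v,u) = ⋃ n, B_n(v,u)`. -/
def Bset {V : Type*} (E : V → V → Prop) (v u : V) : Set V := ⋃ n, Bfam E v u n

/-- The least `n` with `w ∈ B_n(v,u)`. -/
noncomputable def eLevel {V : Type*} (E : V → V → Prop) (v u w : V) : ℕ :=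
  sInf {n | w ∈ Bfam E v u n}

/-! An interval meeting two disjoint intervals covers the gap between them, so any two common
neighbours of non-adjacent vertices overlap: interval graphs have no induced 4-cycle `a c b d`.
Comparing `c, d` in an associated order `≺` with `a ≺ b`, the case `d ≺ c` would force exactly
such a 4-cycle. -/

namespace IsIntervalRep

variable {L : Type} [LinearOrder L] {E : V → V → Prop} {fL fR : V → L}

theorem not_adj_iff (h : IsIntervalRep E fL fR) (u v : V) :
    ¬ E u v ↔ fR v < fL u ∨ fR u < fL v := by
  rw [h.2, not_and_or, not_le, not_le]

theorem adj_of_covers_gap (h : IsIntervalRep E fL fR) {a b x y : V} (hab : fR a < fL b)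
    (hxa : E a x) (hxb : E b x) (hya : E a y) (hyb : E b y) : E x y := by
  rw [h.2] at hxa hxb hya hyb ⊢
  exact ⟨((hxa.2.trans_lt hab).trans_le hyb.1).le, ((hya.2.trans_lt hab).trans_le hxb.1).le⟩

theorem adj_of_common_neighbors (h : IsIntervalRep E fL fR) {a b c d : V} (hab : ¬ E a b)
    (hac : E a c) (hbc : E b c) (had : E a d) (hbd : E b d) : E c d := by
  rcases (h.not_adj_iff a b).1 hab with hba | hab
  · exact h.adj_of_covers_gap hba hbc hac hbd had
  · exact h.adj_of_covers_gap hab hac hbc had hbd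

end IsIntervalRep

theorem IsIntervalGraph.adj_of_common_neighbors {E : V → V → Prop} (hE : IsIntervalGraph E)
    {a b c d : V} (hab : ¬ E a b) (hac : E a c) (hbc : E b c) (had : E a d) (hbd : E b d) :
    E c d :=
  let ⟨_, _, _, _, _, _, hrep⟩ := hE
  hrep.adj_of_common_neighbors hab hac hbc had hbd

namespace IsAssociated

variable {E r : V → V → Prop}

theorem not_adj_of_rel (hr : IsAssociated E r) {u v : V} (huv : r u v) : ¬ E u v :=
  (hr.2.2 u v).2 (Or.inl huv)

theorem adj_symm (hr : IsAssociated E r) {u v : V} (huv : E u v) : E v u := by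
  by_contra hvu
  exact (hr.2.2 u v).2 ((hr.2.2 v u).1 hvu).symm huv

theorem adj_of_rel_of_rel (hr : IsAssociated E r) {a b c d : V} (hab : r a b) (hdc : r d c)
    (hac : E a c) (hbd : E b d) : E b c ∧ E a d := by
  have trans := hr.2.1
  have hdb : ¬ r d b := fun hdb => hr.not_adj_of_rel hdb (hr.adj_symm hbd)
  constructor
  · by_contra hbc
    rcases (hr.2.2 b c).1 hbc with hbc | hcb
    · exact hr.not_adj_of_rel (trans _ _ _ hab hbc) hac
    · exact hdb (trans _ _ _ hdc hcb)
  · by_contra had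
    rcases (hr.2.2 a d).1 had with had | hda
    · exact hr.not_adj_of_rel (trans _ _ _ had hdc) hac
    · exact hdb (trans _ _ _ hda hab)

end IsAssociated

theorem stmt19 {V : Type*} (E : V → V → Prop) (hIG : IsIntervalGraph E)
    (r : V → V → Prop) (hr : IsAssociated E r) (a b c d : V)
    (hab : ¬ E a b) (hcd : ¬ E c d) (hQ : Qrel E (a, b) (c, d)) :
    ¬ (E b c ∧ E a d) ∧ (r a b → r c d) := by
  obtain ⟨hac, hbd⟩ := hQ
  have no_cycle : ¬ (E b c ∧ E a d) := fun ⟨hbc, had⟩ =>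
    hcd (hIG.adj_of_common_neighbors hab hac hbc had hbd)
  refine ⟨no_cycle, fun hrab => ?_⟩
  rcases (hr.2.2 c d).1 hcd with hcd | hdc
  · exact hcd
  · exact absurd (hr.adj_of_rel_of_rel hrab hdc hac hbd) no_cycle
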